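/- Let ι be a finite nonempty type, let K : ℕ, let u₀, v₀, u₀', v₀', w₀ : List α, and let u, v, u', v', w : ι → List α be families of words. Suppose that for all k₁ k₂ : ℕ there exists i : ι such that levenshtein (u₀ ++ v₀^{k₁} ++ u₀' ++ (v₀')^{k₂} ++ w₀) (u i ++ (v i)^{k₁} ++ (u' i) ++ (v' i)^{k₂} ++ w i) ≤ K. Then there exists a single index i : ι such that v₀ is conjugate to v i and v₀' is conjugate to v' i. (Core of the claim that connected loops admit a common conjugacy witness.) -/

import Mathlib

namespace Levenshtein

/-- Cost structure for Levenshtein edit distance (as in the former Mathlib file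
`Mathlib/Data/List/EditDistance/Defs.lean`). -/
structure Cost (α β δ : Type*) where
  /-- Cost to delete an element from a list. -/
  delete : α → δ
  /-- Cost to insert an element into a list. -/
  insert : β → δ
  /-- Cost to substitute one element for another in a list. -/
  substitute : α → β → δ

/-- The default cost structure: each insertion, deletion and substitution costs 1. -/
def defaultCost {α : Type*} [DecidableEq α] : Cost α α ℕ where
  delete _ := 1
  insert _ := 1
  substitute a b := if a = b then 0 else 1

/-- Inductive step of the edit distance computation. -/
def impl {α β δ : Type*} [AddZeroClass δ] [Min δ] (C : Cost α β δ)
    (xs : List α) (y : β) (d : {r : List δ // 0 < r.length}) : {r : List δ // 0 < r.length} :=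
  let ⟨ds, w⟩ := d
  xs.zip (ds.zip ds.tail) |>.foldr
    (init := ⟨[C.insert y + ds.getLast (List.ne_nil_of_length_pos w)], by simp⟩)
    (fun ⟨x, d₀, d₁⟩ ⟨r, w⟩ =>
      ⟨min (C.delete x + r[0]) (min (C.insert y + d₀) (C.substitute x y + d₁)) :: r, by simp⟩)

end Levenshtein

/-- Edit distances between all suffixes of `xs` and `ys`. -/
def suffixLevenshtein {α β δ : Type*} [AddZeroClass δ] [Min δ] (C : Levenshtein.Cost α β δ)
    (xs : List α) (ys : List β) : {r : List δ // 0 < r.length} :=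
  ys.foldr
    (Levenshtein.impl C xs)
    (xs.foldr (init := ⟨[0], by simp⟩) (fun a ⟨r, w⟩ => ⟨(C.delete a + r[0]) :: r, by simp⟩))

/-- The Levenshtein edit distance with cost structure `C`. -/
def levenshtein {α β δ : Type*} [AddZeroClass δ] [Min δ] (C : Levenshtein.Cost α β δ)
    (xs : List α) (ys : List β) : δ :=
  let ⟨r, w⟩ := suffixLevenshtein C xs ys
  r[0]

/-- `wpow u k` is the k-fold concatenation `u ++ u ++ ⋯ ++ u` (k copies). -/
def wpow {α : Type*} (u : List α) (k : ℕ) : List α := (List.replicate k u).flatten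

/-! Comparing word lengths along `k₂ = k₁ * k₁`, for an index `i` that serves infinitely many
`k₁`, forces `|v₀| = |v i|` and `|v₀'| = |v' i|`. An edit script of cost at most `K` can be cut
into blocks so that one of any `K + 1` consecutive copies of `v₀` is matched exactly; for large
exponents that copy lands inside `(v i)^k` on the other side, and a factor of `(v i)^k` of length
`|v i|` is a rotation of `v i`. -/

namespace Levenshtein

variable {α β δ : Type*} [AddZeroClass δ] [Min δ] (C : Cost α β δ)

theorem impl_cons (x : α) (xs : List α) (y : β) (d : δ) (ds : List δ)
    (w : 0 < (d :: ds).length) (w' : 0 < ds.length) :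
    (impl C (x :: xs) y ⟨d :: ds, w⟩).1 =
      min (C.delete x + (impl C xs y ⟨ds, w'⟩).1[0]'(impl C xs y ⟨ds, w'⟩).2)
        (min (C.insert y + d) (C.substitute x y + ds[0])) :: (impl C xs y ⟨ds, w'⟩).1 :=
  match ds, w' with
  | _ :: _, _ => rfl

end Levenshtein

open Levenshtein

section Recursion

variable {α β δ : Type*} [AddZeroClass δ] [Min δ] (C : Levenshtein.Cost α β δ)

theorem levenshtein_eq_getElem (xs : List α) (ys : List β) :
    levenshtein C xs ys = (suffixLevenshtein C xs ys).1[0]'(suffixLevenshtein C xs ys).2 := rfl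

theorem suffixLevenshtein_cons_left (x : α) (xs : List α) (ys : List β) :
    (suffixLevenshtein C (x :: xs) ys).1 =
      levenshtein C (x :: xs) ys :: (suffixLevenshtein C xs ys).1 := by
  induction ys with
  | nil => rfl
  | cons y ys ih =>
    have e : suffixLevenshtein C (x :: xs) ys =
        ⟨levenshtein C (x :: xs) ys :: (suffixLevenshtein C xs ys).1, by simp⟩ := Subtype.ext ih
    have e2 : (suffixLevenshtein C (x :: xs) (y :: ys)).1 =
        (impl C (x :: xs) y (suffixLevenshtein C (x :: xs) ys)).1 := rfl
    rw [levenshtein_eq_getElem C (x :: xs) (y :: ys)]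
    simp only [e2, e, impl_cons C x xs y _ _ _ (suffixLevenshtein C xs ys).2]
    rfl

theorem suffixLevenshtein_nil_left (ys : List β) :
    (suffixLevenshtein C [] ys).1 = [levenshtein C [] ys] := by
  cases ys <;> rfl

@[simp] theorem levenshtein_nil_nil : levenshtein C ([] : List α) ([] : List β) = 0 := rfl

@[simp] theorem levenshtein_nil_cons (y : β) (ys : List β) :
    levenshtein C ([] : List α) (y :: ys) = C.insert y + levenshtein C [] ys := by
  change C.insert y + (suffixLevenshtein C [] ys).1.getLast _ = _
  simp only [suffixLevenshtein_nil_left, List.getLast_singleton]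

@[simp] theorem levenshtein_cons_nil (x : α) (xs : List α) :
    levenshtein C (x :: xs) ([] : List β) = C.delete x + levenshtein C xs [] := rfl

theorem levenshtein_cons_cons (x : α) (xs : List α) (y : β) (ys : List β) :
    levenshtein C (x :: xs) (y :: ys) =
      min (C.delete x + levenshtein C xs (y :: ys))
        (min (C.insert y + levenshtein C (x :: xs) ys)
          (C.substitute x y + levenshtein C xs ys)) := by
  have e : suffixLevenshtein C (x :: xs) ys =
      ⟨levenshtein C (x :: xs) ys :: (suffixLevenshtein C xs ys).1, by simp⟩ :=
    Subtype.ext (suffixLevenshtein_cons_left C x xs ys)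
  have e2 : (suffixLevenshtein C (x :: xs) (y :: ys)).1 =
      (impl C (x :: xs) y (suffixLevenshtein C (x :: xs) ys)).1 := rfl
  rw [levenshtein_eq_getElem C (x :: xs) (y :: ys)]
  simp only [e2, e, impl_cons C x xs y _ _ _ (suffixLevenshtein C xs ys).2]
  rfl

end Recursion

section Split

variable {α β δ : Type*}

theorem levenshtein_append_nil [AddMonoid δ] [Min δ] (C : Levenshtein.Cost α β δ)
    (xs xs' : List α) :
    levenshtein C (xs ++ xs') ([] : List β) = levenshtein C xs [] + levenshtein C xs' [] := by
  induction xs with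
  | nil => simp
  | cons x xs ih => simp [ih, add_assoc]

variable [AddCommMonoid δ] [LinearOrder δ] (C : Levenshtein.Cost α β δ)

theorem levenshtein_cons_le_delete (x : α) (xs : List α) (ys : List β) :
    levenshtein C (x :: xs) ys ≤ C.delete x + levenshtein C xs ys := by
  cases ys with
  | nil => simp
  | cons y ys => simp [levenshtein_cons_cons]

theorem levenshtein_cons_cons_le_insert (x : α) (xs : List α) (y : β) (ys : List β) :
    levenshtein C (x :: xs) (y :: ys) ≤ C.insert y + levenshtein C (x :: xs) ys := by
  simp [levenshtein_cons_cons]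

theorem levenshtein_cons_cons_le_substitute (x : α) (xs : List α) (y : β) (ys : List β) :
    levenshtein C (x :: xs) (y :: ys) ≤ C.substitute x y + levenshtein C xs ys := by
  simp [levenshtein_cons_cons]

variable [IsOrderedAddMonoid δ]

theorem exists_levenshtein_add_le_levenshtein_append (xs xs' : List α) (ys : List β) :
    ∃ ys₁ ys₂, ys = ys₁ ++ ys₂ ∧
      levenshtein C xs ys₁ + levenshtein C xs' ys₂ ≤ levenshtein C (xs ++ xs') ys := by
  induction xs generalizing ys with
  | nil => exact ⟨[], ys, rfl, by simp⟩
  | cons x xs ihx =>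
    induction ys with
    | nil => exact ⟨[], [], rfl, (levenshtein_append_nil C (x :: xs) xs').ge⟩
    | cons y ys ihy =>
      rw [List.cons_append, levenshtein_cons_cons]
      rcases min_choice (C.delete x + levenshtein C (xs ++ xs') (y :: ys))
        (min (C.insert y + levenshtein C (x :: (xs ++ xs')) ys)
          (C.substitute x y + levenshtein C (xs ++ xs') ys)) with h | h <;> rw [h]
      · obtain ⟨ys₁, ys₂, hys, hle⟩ := ihx (y :: ys)
        refine ⟨ys₁, ys₂, hys, ?_⟩
        calc _ ≤ C.delete x + levenshtein C xs ys₁ + levenshtein C xs' ys₂ := by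
              gcongr; exact levenshtein_cons_le_delete C x xs ys₁
          _ ≤ _ := by rw [add_assoc]; exact add_le_add le_rfl hle
      rcases min_choice (C.insert y + levenshtein C (x :: (xs ++ xs')) ys)
          (C.substitute x y + levenshtein C (xs ++ xs') ys) with h | h <;> rw [h]
      · obtain ⟨ys₁, ys₂, rfl, hle⟩ := ihy
        refine ⟨y :: ys₁, ys₂, rfl, ?_⟩
        calc _ ≤ C.insert y + levenshtein C (x :: xs) ys₁ + levenshtein C xs' ys₂ := by
              gcongr; exact levenshtein_cons_cons_le_insert C x xs y ys₁
          _ ≤ _ := by rw [add_assoc]; exact add_le_add le_rfl hle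
      · obtain ⟨ys₁, ys₂, rfl, hle⟩ := ihx ys
        refine ⟨y :: ys₁, ys₂, rfl, ?_⟩
        calc _ ≤ C.substitute x y + levenshtein C xs ys₁ + levenshtein C xs' ys₂ := by
              gcongr; exact levenshtein_cons_cons_le_substitute C x xs y ys₁
          _ ≤ _ := by rw [add_assoc]; exact add_le_add le_rfl hle

end Split

section DefaultCost

variable {α : Type*} [DecidableEq α]

@[simp] theorem Levenshtein.defaultCost_delete (a : α) :
    (defaultCost : Cost α α ℕ).delete a = 1 := rfl

@[simp] theorem Levenshtein.defaultCost_insert (a : α) :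
    (defaultCost : Cost α α ℕ).insert a = 1 := rfl

@[simp] theorem Levenshtein.defaultCost_substitute (a b : α) :
    (defaultCost : Cost α α ℕ).substitute a b = if a = b then 0 else 1 := rfl

theorem levenshtein_nil_left (ys : List α) :
    levenshtein defaultCost [] ys = ys.length := by
  induction ys with
  | nil => simp
  | cons y ys ih => simp [ih, Nat.add_comm]

theorem levenshtein_nil_right (xs : List α) :
    levenshtein defaultCost xs [] = xs.length := by
  induction xs with
  | nil => simp
  | cons x xs ih => simp [ih, Nat.add_comm]

theorem eq_of_levenshtein_eq_zero {xs ys : List α} (h : levenshtein defaultCost xs ys = 0) :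
    xs = ys := by
  induction xs generalizing ys with
  | nil => simpa [levenshtein_nil_left, eq_comm] using h
  | cons x xs ih =>
    cases ys with
    | nil => simp [levenshtein_nil_right] at h
    | cons y ys =>
      simp only [levenshtein_cons_cons, defaultCost_delete, defaultCost_insert,
        defaultCost_substitute, Nat.min_eq_zero_iff] at h
      split_ifs at h with hxy
      · rw [hxy, ih (show levenshtein defaultCost xs ys = 0 by omega)]
      · omega

theorem length_le_length_add_levenshtein (xs ys : List α) :
    xs.length ≤ ys.length + levenshtein defaultCost xs ys ∧
      ys.length ≤ xs.length + levenshtein defaultCost xs ys := by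
  induction xs generalizing ys with
  | nil => simp [levenshtein_nil_left]
  | cons x xs ihx =>
    induction ys with
    | nil => simp [levenshtein_nil_right]
    | cons y ys ihy =>
      have := ihx ys
      have := ihx (y :: ys)
      simp only [List.length_cons, levenshtein_cons_cons, defaultCost_delete, defaultCost_insert,
        defaultCost_substitute] at *
      split_ifs <;> omega

end DefaultCost

section Words

variable {α : Type*}

theorem wpow_add (u : List α) (m n : ℕ) : wpow u (m + n) = wpow u m ++ wpow u n := by
  rw [wpow, List.replicate_add, List.flatten_append]; rfl

theorem wpow_succ (u : List α) (n : ℕ) : wpow u (n + 1) = wpow u n ++ u := by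
  rw [wpow_add]; simp [wpow]

theorem wpow_succ' (u : List α) (n : ℕ) : wpow u (n + 1) = u ++ wpow u n := by
  rw [Nat.add_comm, wpow_add]; simp [wpow]

@[simp] theorem length_wpow (u : List α) (k : ℕ) : (wpow u k).length = k * u.length := by
  simp [wpow, List.sum_replicate]

theorem List.IsPrefix.eq_of_length_eq {l₁ l₂ l : List α} (h₁ : l₁ <+: l) (h₂ : l₂ <+: l)
    (h : l₁.length = l₂.length) : l₁ = l₂ :=
  (List.prefix_of_prefix_length_le h₁ h₂ h.le).eq_of_length h

theorem isRotated_of_infix_wpow {p q : List α} (hl : p.length = q.length) :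
    ∀ {k : ℕ}, p <:+: wpow q k → p ~r q
  | 0, h => by
    obtain rfl : p = [] := List.infix_nil.1 h
    obtain rfl : q = [] := List.eq_nil_of_length_eq_zero hl.symm
    rfl
  | k + 1, ⟨s, t, h⟩ => by
    rw [wpow_succ'] at h
    rcases le_or_gt q.length s.length with hs | hs
    · obtain ⟨s', rfl⟩ : q <+: s :=
        List.prefix_of_prefix_length_le ⟨_, rfl⟩ ⟨p ++ t, by simpa using h⟩ hs
      exact isRotated_of_infix_wpow hl ⟨s', t, by simpa using h⟩
    · obtain ⟨c, hc⟩ : s <+: q :=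
        List.prefix_of_prefix_length_le ⟨p ++ t, by simpa using h⟩ ⟨_, rfl⟩ hs.le
      have hpt : p ++ t = c ++ wpow q k := by simpa [← hc] using h
      obtain ⟨d, rfl⟩ : c <+: p :=
        List.prefix_of_prefix_length_le ⟨_, rfl⟩ ⟨t, hpt⟩ (by simp [← hc] at hl; omega)
      have hdt : d ++ t = wpow q k := by simpa using hpt
      obtain rfl : d = s :=
        List.IsPrefix.eq_of_length_eq (l := wpow q (k + 1))
          (⟨t ++ q, by rw [wpow_succ, ← hdt, List.append_assoc]⟩)
          (⟨c ++ wpow q k, by rw [wpow_succ', ← hc, List.append_assoc]⟩)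
          (by simp [← hc] at hl; omega)
      rw [← hc]
      exact List.isRotated_append

theorem List.infix_of_append_append_eq {l₁ l₂ l₃ x y z : List α}
    (h : l₁ ++ l₂ ++ l₃ = x ++ y ++ z) (h₁ : x.length ≤ l₁.length)
    (h₂ : l₁.length + l₂.length ≤ x.length + y.length) :
    l₂ <:+: y := by
  obtain ⟨e, rfl⟩ : x <+: l₁ :=
    List.prefix_of_prefix_length_le (l₃ := x ++ y ++ z) ⟨y ++ z, by simp⟩
      ⟨l₂ ++ l₃, by simpa using h⟩ h₁
  have hpre : x ++ e ++ l₂ <+: x ++ y :=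
    List.prefix_of_prefix_length_le ⟨l₃, rfl⟩ ⟨z, h.symm⟩ (by simp at h₂ ⊢; omega)
  rw [List.append_assoc, List.prefix_append_right_inj] at hpre
  exact (List.suffix_append e l₂).isInfix.trans hpre.isInfix

end Words

section Conjugacy

variable {α : Type*} [DecidableEq α]

theorem infix_of_levenshtein_wpow_lt {p ys : List α} :
    ∀ {n : ℕ}, levenshtein defaultCost (wpow p n) ys < n → p <:+: ys
  | 0, h => absurd h (Nat.not_lt_zero _)
  | n + 1, h => by
    obtain ⟨ys₁, ys₂, rfl, hle⟩ :=
      exists_levenshtein_add_le_levenshtein_append defaultCost p (wpow p n) ys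
    rw [← wpow_succ'] at hle
    by_cases h₀ : levenshtein defaultCost p ys₁ = 0
    · rw [← eq_of_levenshtein_eq_zero h₀]
      exact List.infix_append_left
    · exact (infix_of_levenshtein_wpow_lt (n := n) (by omega)).trans
        (List.suffix_append _ _).isInfix

theorem isRotated_of_levenshtein_wpow_le {A B A' B' p q : List α} {k K : ℕ}
    (hl : p.length = q.length) (hk : A.length + A'.length + 3 * K + 1 ≤ k)
    (h : levenshtein defaultCost (A ++ wpow p k ++ B) (A' ++ wpow q k ++ B') ≤ K) :
    p ~r q := by
  rcases Nat.eq_zero_or_pos p.length with hp | hp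
  · rw [List.eq_nil_of_length_eq_zero hp, List.eq_nil_of_length_eq_zero (hl.symm.trans hp)]
  obtain ⟨r, rfl⟩ : ∃ r, k = (A'.length + K) + (K + 1) + r :=
    ⟨k - (A'.length + 2 * K + 1), by omega⟩
  -- cut before and after `K + 1` copies of `p`: one of them survives the edits intact, and the
  -- matching piece `b₂` of the other word lies inside `wpow q k`
  have ha : A ++ wpow p (A'.length + K + (K + 1) + r) ++ B =
      (A ++ wpow p (A'.length + K)) ++ (wpow p (K + 1) ++ (wpow p r ++ B)) := by
    simp [wpow_add]
  rw [ha] at h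
  obtain ⟨b₁, c, hb, h₁⟩ := exists_levenshtein_add_le_levenshtein_append defaultCost
    (A ++ wpow p (A'.length + K)) (wpow p (K + 1) ++ (wpow p r ++ B))
    (A' ++ wpow q (A'.length + K + (K + 1) + r) ++ B')
  obtain ⟨b₂, b₃, rfl, h₂⟩ :=
    exists_levenshtein_add_le_levenshtein_append defaultCost (wpow p (K + 1)) (wpow p r ++ B) c
  have hpb : p <:+: b₂ := infix_of_levenshtein_wpow_lt (n := K + 1) (by omega)
  have len₁ := length_le_length_add_levenshtein (A ++ wpow p (A'.length + K)) b₁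
  have len₂ := length_le_length_add_levenshtein (wpow p (K + 1)) b₂
  simp only [List.length_append, length_wpow] at len₁ len₂
  refine isRotated_of_infix_wpow hl (hpb.trans (List.infix_of_append_append_eq
    ((List.append_assoc _ _ _).trans hb.symm) ?_ ?_))
  · nlinarith
  · simp only [length_wpow, ← hl]
    nlinarith

end Conjugacy

open Filter

theorem toLex_le_of_frequently_le {c c' d d' e e' : ℕ}
    (h : ∃ᶠ k in atTop, c + k * d + k * k * e ≤ c' + k * d' + k * k * e') :
    toLex (e, d) ≤ toLex (e', d') := by
  obtain ⟨k, hle, hk⟩ := (h.and_eventually (eventually_ge_atTop (c' + d' + 1))).exists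
  refine Prod.Lex.toLex_le_toLex'.2 ⟨?_, ?_⟩
  · by_contra! he
    nlinarith
  · rintro rfl
    by_contra! hd
    nlinarith

theorem length_eq_of_frequently_levenshtein_le {α : Type*} [DecidableEq α]
    {x y z x' y' z' p p' q q' : List α} {K : ℕ}
    (h : ∃ᶠ k in atTop, levenshtein defaultCost (x ++ wpow p k ++ y ++ wpow p' (k * k) ++ z)
      (x' ++ wpow q k ++ y' ++ wpow q' (k * k) ++ z') ≤ K) :
    p.length = q.length ∧ p'.length = q'.length := by
  have hlen := fun k => length_le_length_add_levenshtein
    (x ++ wpow p k ++ y ++ wpow p' (k * k) ++ z) (x' ++ wpow q k ++ y' ++ wpow q' (k * k) ++ z')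
  simp only [List.length_append, length_wpow] at hlen
  have key := le_antisymm
    (toLex_le_of_frequently_le (h.mono fun k hk => show x.length + y.length + z.length +
      k * p.length + k * k * p'.length ≤ x'.length + y'.length + z'.length + K +
      k * q.length + k * k * q'.length by linarith [hlen k]))
    (toLex_le_of_frequently_le (h.mono fun k hk => show x'.length + y'.length + z'.length +
      k * q.length + k * k * q'.length ≤ x.length + y.length + z.length + K +
      k * p.length + k * k * p'.length by linarith [hlen k]))
  simp only [EmbeddingLike.apply_eq_iff_eq, Prod.mk.injEq] at key
  exact ⟨key.2, key.1⟩

theorem stmt_10_general {α : Type*} [DecidableEq α] {ι : Type*} [Fintype ι]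
    (K : ℕ) (u₀ v₀ u₀' v₀' w₀ : List α) (u v u' v' w : ι → List α)
    (h : ∀ k₁ k₂ : ℕ, ∃ i : ι,
      levenshtein Levenshtein.defaultCost
        (u₀ ++ wpow v₀ k₁ ++ u₀' ++ wpow v₀' k₂ ++ w₀)
        (u i ++ wpow (v i) k₁ ++ u' i ++ wpow (v' i) k₂ ++ w i) ≤ K) :
    ∃ i : ι, List.IsRotated v₀ (v i) ∧ List.IsRotated v₀' (v' i) := by
  obtain ⟨i, hi⟩ := frequently_exists.1 (Frequently.of_forall (f := atTop) fun k => h k (k * k))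
  obtain ⟨hl, hl'⟩ := length_eq_of_frequently_levenshtein_le hi
  obtain ⟨k, hlev, hk⟩ := (hi.and_eventually (eventually_ge_atTop
    (u₀.length + u₀'.length + (u i).length + (u' i).length + 3 * K + 2 * v₀.length + 1))).exists
  refine ⟨i, isRotated_of_levenshtein_wpow_le hl ?_ (by simpa only [List.append_assoc] using hlev),
    isRotated_of_levenshtein_wpow_le hl' ?_ hlev⟩
  · omega
  · simp only [List.length_append, length_wpow, ← hl]
    nlinarith

theorem stmt_10 {α : Type*} [DecidableEq α] {ι : Type*} [Fintype ι] [Nonempty ι]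
    (K : ℕ) (u₀ v₀ u₀' v₀' w₀ : List α) (u v u' v' w : ι → List α)
    (h : ∀ k₁ k₂ : ℕ, ∃ i : ι,
      levenshtein Levenshtein.defaultCost
        (u₀ ++ wpow v₀ k₁ ++ u₀' ++ wpow v₀' k₂ ++ w₀)
        (u i ++ wpow (v i) k₁ ++ u' i ++ wpow (v' i) k₂ ++ w i) ≤ K) :
    ∃ i : ι, List.IsRotated v₀ (v i) ∧ List.IsRotated v₀' (v' i) :=
  stmt_10_general K u₀ v₀ u₀' v₀' w₀ u v u' v' w h
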